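/- arXiv:funct-an/9704005 — 5 statements merged into one kernel-verified Lean document; each statement's English description precedes it below -/
import Mathlib

section
/- Let H be a complex Hilbert space and B : H × H → ℂ a sesquilinear form (linear in the first variable, conjugate-linear in the second) such that B(v,v) is real and nonnegative for every v ∈ H. If the function H → ℝ, v ↦ B(v,v), is lower semicontinuous with respect to the norm topology of H, then B is bounded; more precisely, there exists a unique positive bounded operator T on H such that B(v,w) = ⟨T v, w⟩ for all v, w ∈ H. -/
/-!
Reading `B` as the form `(x, y) ↦ B y x`, which is conjugate-linear in `x`, polarization shows
that a sesquilinear form with real diagonal is Hermitian; being also positive, it is a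
semi-inner product, so `x ↦ √(B x x)` is a seminorm satisfying Cauchy–Schwarz. This seminorm is
lower semicontinuous, hence continuous because a Banach space is barrelled (Baire category), hence
bounded by `C ‖x‖`. Cauchy–Schwarz then bounds the form by `C² ‖x‖ ‖y‖`, and the Riesz
representation of bounded sesquilinear forms yields `T`.
-/

open scoped InnerProductSpace ComplexConjugate
open RCLike

namespace LinearMap

theorem isSymm_of_forall_im_apply_self_eq_zero {E : Type*} [AddCommGroup E] [Module ℂ E]
    {f : E →ₗ⋆[ℂ] E →ₗ[ℂ] ℂ} (hf : ∀ x, (f x x).im = 0) : f.IsSymm := by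
  refine ⟨fun x y => ?_⟩
  have h₁ := hf (x + y)
  have h₂ := hf (x + Complex.I • y)
  simp only [map_add, map_smulₛₗ, add_apply, smul_apply, smul_eq_mul, Complex.conj_I,
    Complex.add_re, Complex.add_im, Complex.mul_re, Complex.mul_im, Complex.neg_re,
    Complex.neg_im, Complex.I_re, Complex.I_im, RingHom.id_apply, hf] at h₁ h₂
  apply Complex.ext <;> simp only [Complex.conj_re, Complex.conj_im] <;> linarith

variable {𝕜 E : Type*} [RCLike 𝕜] [AddCommGroup E] [Module 𝕜 E]

abbrev IsSymm.preInnerProductSpaceCore {f : E →ₗ⋆[𝕜] E →ₗ[𝕜] 𝕜} (hf : f.IsSymm)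
    (hpos : ∀ x, 0 ≤ re (f x x)) : PreInnerProductSpace.Core 𝕜 E where
  inner x y := f x y
  conj_inner_symm x y := hf.eq y x
  re_inner_nonneg := hpos
  add_left x y z := by simp
  smul_left x y r := by simp

end LinearMap

namespace PreInnerProductSpace.Core

variable {𝕜 : Type*} [RCLike 𝕜]

section Seminorm

variable {F : Type*} [AddCommGroup F] [Module 𝕜 F]

noncomputable def seminorm (c : PreInnerProductSpace.Core 𝕜 F) : Seminorm 𝕜 F :=
  letI := c
  letI := InnerProductSpace.Core.toSeminormedAddCommGroup (𝕜 := 𝕜) (F := F)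
  letI := InnerProductSpace.Core.toNormedSpace (𝕜 := 𝕜) (F := F)
  normSeminorm 𝕜 F

theorem seminorm_apply (c : PreInnerProductSpace.Core 𝕜 F) (x : F) :
    c.seminorm x = √(re (c.inner x x)) := rfl

theorem norm_inner_le_seminorm_mul_seminorm (c : PreInnerProductSpace.Core 𝕜 F) (x y : F) :
    ‖c.inner x y‖ ≤ c.seminorm x * c.seminorm y :=
  InnerProductSpace.Core.norm_inner_le_norm (c := c) x y

end Seminorm

variable {E : Type*} [NormedAddCommGroup E] [NormedSpace 𝕜 E] [CompleteSpace E]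

theorem continuous_seminorm (c : PreInnerProductSpace.Core 𝕜 E)
    (hc : LowerSemicontinuous fun x => re (c.inner x x)) : Continuous c.seminorm := by
  have hsqrt : LowerSemicontinuous fun x => √(re (c.inner x x)) :=
    Real.continuous_sqrt.comp_lowerSemicontinuous hc fun _ _ => Real.sqrt_le_sqrt
  exact c.seminorm.continuous_of_lowerSemicontinuous (funext c.seminorm_apply ▸ hsqrt)

theorem exists_norm_inner_le (c : PreInnerProductSpace.Core 𝕜 E)
    (hc : LowerSemicontinuous fun x => re (c.inner x x)) :
    ∃ C, ∀ x y, ‖c.inner x y‖ ≤ C * ‖x‖ * ‖y‖ := by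
  obtain ⟨C, hC, hle⟩ := c.seminorm.bound_of_continuous_normedSpace (c.continuous_seminorm hc)
  refine ⟨C * C, fun x y => (c.norm_inner_le_seminorm_mul_seminorm x y).trans ?_⟩
  calc c.seminorm x * c.seminorm y ≤ (C * ‖x‖) * (C * ‖y‖) :=
        mul_le_mul (hle x) (hle y) (apply_nonneg _ _) (by positivity)
    _ = C * C * ‖x‖ * ‖y‖ := by ring

end PreInnerProductSpace.Core

/-- A sesquilinear form (linear in the first variable, conjugate-linear in the second)
on a complex Hilbert space whose quadratic part is real, nonnegative and lower
semicontinuous is represented by a unique positive bounded operator. -/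
theorem lsc_positive_sesquilinear_form_is_bounded
    {H : Type*} [NormedAddCommGroup H] [InnerProductSpace ℂ H] [CompleteSpace H]
    (B : H → H → ℂ)
    (hadd₁ : ∀ v v' w : H, B (v + v') w = B v w + B v' w)
    (hsmul₁ : ∀ (c : ℂ) (v w : H), B (c • v) w = c * B v w)
    (hadd₂ : ∀ v w w' : H, B v (w + w') = B v w + B v w')
    (hsmul₂ : ∀ (c : ℂ) (v w : H), B v (c • w) = conj c * B v w)
    (hreal : ∀ v : H, (B v v).im = 0)
    (hpos : ∀ v : H, 0 ≤ (B v v).re)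
    (hlsc : LowerSemicontinuous fun v : H => (B v v).re) :
    ∃! T : H →L[ℂ] H, T.IsPositive ∧ ∀ v w : H, B v w = ⟪w, T v⟫_ℂ := by
  let f : H →ₗ⋆[ℂ] H →ₗ[ℂ] ℂ :=
    LinearMap.mk₂'ₛₗ _ _ (fun w v => B v w) (fun w w' v => hadd₂ v w w')
      (fun c w v => hsmul₂ c v w) (fun w v v' => hadd₁ v v' w) (fun c w v => hsmul₁ c v w)
  have hf : f.IsSymm := LinearMap.isSymm_of_forall_im_apply_self_eq_zero hreal
  obtain ⟨C, hC⟩ := (hf.preInnerProductSpaceCore hpos).exists_norm_inner_le hlsc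
  let T := InnerProductSpace.continuousLinearMapOfBilin (f.mkContinuous₂ C hC)
  have hT : ∀ v w, ⟪T v, w⟫_ℂ = B w v := InnerProductSpace.continuousLinearMapOfBilin_apply _
  have hrep : ∀ v w, B v w = ⟪w, T v⟫_ℂ := fun v w => by
    rw [← inner_conj_symm, hT]
    exact (hf.eq v w).symm
  refine ⟨T, ⟨⟨fun v w => (hT v w).trans (hrep w v), fun v => ?_⟩, hrep⟩, fun T' ⟨_, hT'⟩ => ?_⟩
  · rw [ContinuousLinearMap.reApplyInnerSelf_apply, hT]
    exact hpos v
  · ext v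
    exact ext_inner_left ℂ fun w => (hT' v w).symm.trans (hrep v w)
end

section
/- Let A be a C*-algebra, φ a lower semicontinuous weight on A, H a complex Hilbert space, and x : H × H → A a map that is linear in its first variable and conjugate-linear in its second, satisfying x(w,v) = x(v,w)*, x(v,v) ≥ 0 in A for every v ∈ H, and ‖x(v,w)‖ ≤ C‖v‖‖w‖ for all v, w ∈ H and some constant C ≥ 0. If φ(x(v,v)) < ∞ for every v ∈ H, then there exists a unique positive bounded operator T on H such that ⟨T v, v⟩ = φ(x(v,v)) for every v ∈ H. -/
/-!
Because `φ` is additive and positively homogeneous on `A⁺`, every identity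
`r • x(u₁,u₁) + s • x(u₂,u₂) = t • x(u₃,u₃) + u • x(u₄,u₄)` with `r, s, t, u ≥ 0` passes to the
finite quantities `q u = φ (x u u)`. So `q` satisfies the parallelogram law, and its real
polarization is `ℝ`-bilinear (homogeneity also comes from such an identity), symmetric and
invariant under `v ↦ I • v`; it is therefore the real part of a Hermitian sesquilinear form.
Lower semicontinuity makes the sets `{q ≤ n}` closed, so by Baire `q` is bounded on a ball and
hence `q v ≤ M ‖v‖²`. Cauchy–Schwarz then bounds the form, and the Riesz representation
gives `T`.
-/

open scoped InnerProductSpace ComplexConjugate ENNReal NNReal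

structure IsWeight {A : Type*} [AddCommMonoid A] [PartialOrder A] [Module ℝ A]
    (φ : A → ℝ≥0∞) : Prop where
  map_add : ∀ a b : A, 0 ≤ a → 0 ≤ b → φ (a + b) = φ a + φ b
  map_smul : ∀ (r : ℝ≥0) (a : A), 0 ≤ a → φ ((r : ℝ) • a) = (r : ℝ≥0∞) * φ a

theorem IsWeight.toReal_map_smul_add_smul {A : Type*} [AddCommMonoid A] [PartialOrder A]
    [IsOrderedAddMonoid A] [Module ℝ A] [PosSMulMono ℝ A] {φ : A → ℝ≥0∞} (hφ : IsWeight φ)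
    {a b : A} (ha : 0 ≤ a) (hb : 0 ≤ b) (ha' : φ a ≠ ∞) (hb' : φ b ≠ ∞) (r s : ℝ≥0) :
    (φ ((r : ℝ) • a + (s : ℝ) • b)).toReal = r * (φ a).toReal + s * (φ b).toReal := by
  rw [hφ.map_add _ _ (smul_nonneg r.coe_nonneg ha) (smul_nonneg s.coe_nonneg hb),
    hφ.map_smul r a ha, hφ.map_smul s b hb,
    ENNReal.toReal_add (ENNReal.mul_ne_top ENNReal.coe_ne_top ha')
      (ENNReal.mul_ne_top ENNReal.coe_ne_top hb'), ENNReal.toReal_mul, ENNReal.toReal_mul]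
  rfl

section Polarization

variable {E : Type*} [AddCommGroup E] {q : E → ℝ}

noncomputable def realPolarization (q : E → ℝ) (v w : E) : ℝ := (q (v + w) - q (v - w)) / 4

variable (hpar : ∀ v w, q (v + w) + q (v - w) = 2 * q v + 2 * q w)
include hpar

theorem map_neg_of_parallelogram (v : E) : q (-v) = q v := by
  have h₀ := hpar 0 0
  have h := hpar 0 v
  simp only [add_zero, zero_add, zero_sub, neg_zero] at h₀ h
  linarith

theorem realPolarization_comm (v w : E) : realPolarization q v w = realPolarization q w v := by
  rw [realPolarization, realPolarization, add_comm, ← map_neg_of_parallelogram hpar (w - v),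
    neg_sub]

theorem realPolarization_self (v : E) : realPolarization q v v = q v := by
  have h₀ := hpar 0 0
  have h := hpar v v
  simp only [add_zero, sub_self] at h₀ h
  rw [realPolarization, sub_self]
  linarith

theorem realPolarization_neg_left (v w : E) :
    realPolarization q (-v) w = -realPolarization q v w := by
  rw [realPolarization, realPolarization, show -v + w = -(v - w) by abel,
    show -v - w = -(v + w) by abel, map_neg_of_parallelogram hpar, map_neg_of_parallelogram hpar]
  ring

/-- Both sides equal `(q (u + v + 2 w) - q (u + v - 2 w)) / 8`, by two parallelogram laws. -/
theorem realPolarization_add_left (u v w : E) :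
    realPolarization q (u + v) w = realPolarization q u w + realPolarization q v w := by
  have h₁ := hpar (u + w) (v + w)
  have h₂ := hpar (u - w) (v - w)
  have h₃ := hpar (u + v + w) w
  have h₄ := hpar (u + v - w) w
  rw [show u + w + (v + w) = u + v + w + w by abel, show u + w - (v + w) = u - v by abel] at h₁
  rw [show u - w + (v - w) = u + v - w - w by abel, show u - w - (v - w) = u - v by abel] at h₂
  rw [add_sub_cancel_right] at h₃
  rw [sub_add_cancel] at h₄
  simp only [realPolarization]
  linarith

variable [Module ℝ E] (hsmul : ∀ (r : ℝ≥0) (v w : E),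
  realPolarization q ((r : ℝ) • v) w = r * realPolarization q v w)
include hsmul

theorem realPolarization_smul_left (c : ℝ) (v w : E) :
    realPolarization q (c • v) w = c * realPolarization q v w := by
  rcases le_total 0 c with hc | hc
  · exact hsmul ⟨c, hc⟩ v w
  · have h : realPolarization q ((-c) • v) w = -c * realPolarization q v w :=
      hsmul ⟨-c, neg_nonneg.2 hc⟩ v w
    rw [show c • v = -((-c) • v) by rw [neg_smul, neg_neg], realPolarization_neg_left hpar]
    linarith

noncomputable def realPolarizationForm : LinearMap.BilinForm ℝ E :=
  LinearMap.mk₂ ℝ (realPolarization q) (realPolarization_add_left hpar)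
    (realPolarization_smul_left hpar hsmul)
    (fun v w w' => by
      rw [realPolarization_comm hpar v, realPolarization_add_left hpar,
        realPolarization_comm hpar w, realPolarization_comm hpar w'])
    (fun c v w => by
      rw [smul_eq_mul, realPolarization_comm hpar v, realPolarization_smul_left hpar hsmul,
        realPolarization_comm hpar w])

@[simp]
theorem realPolarizationForm_apply (v w : E) :
    realPolarizationForm hpar hsmul v w = realPolarization q v w := rfl

theorem realPolarizationForm_isSymm : LinearMap.IsSymm (realPolarizationForm hpar hsmul) :=
  ⟨realPolarization_comm hpar⟩

end Polarization

section WeightQuadratic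

variable {A : Type*} [AddCommGroup A] [Module ℝ A] {E : Type*} [AddCommGroup E] [Module ℝ E]

noncomputable def weightQuadratic (φ : A → ℝ≥0∞) (Y : E →ₗ[ℝ] E →ₗ[ℝ] A) (v : E) : ℝ :=
  (φ (Y v v)).toReal

variable [PartialOrder A] {φ : A → ℝ≥0∞} {Y : E →ₗ[ℝ] E →ₗ[ℝ] A}

theorem isClosed_setOf_weightQuadratic_le [TopologicalSpace A] [TopologicalSpace E]
    (hlsc : ∀ α : ℝ≥0, IsClosed {a : A | 0 ≤ a ∧ φ a ≤ α}) (hY : ∀ v, 0 ≤ Y v v)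
    (hfin : ∀ v, φ (Y v v) ≠ ∞) (hcont : Continuous fun v => Y v v) (α : ℝ≥0) :
    IsClosed {v | weightQuadratic φ Y v ≤ α} := by
  convert (hlsc α).preimage hcont using 1
  ext v
  simp only [Set.mem_ofPred_eq, Set.mem_preimage, hY v, true_and, weightQuadratic]
  rw [← ENNReal.toReal_le_toReal (hfin v) ENNReal.coe_ne_top, ENNReal.coe_toReal]

theorem weightQuadratic_smul (hφ : IsWeight φ) (hY : ∀ v, 0 ≤ Y v v) (r : ℝ) (v : E) :
    weightQuadratic φ Y (r • v) = r ^ 2 * weightQuadratic φ Y v := by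
  have h : Y (r • v) (r • v) = ((r ^ 2).toNNReal : ℝ) • Y v v := by
    rw [Real.coe_toNNReal _ (sq_nonneg r)]
    simp only [map_smul, LinearMap.smul_apply, smul_smul, sq]
  rw [weightQuadratic, h, hφ.map_smul _ _ (hY v), ENNReal.toReal_mul, ENNReal.coe_toReal,
    Real.coe_toNNReal _ (sq_nonneg r)]
  rfl

variable [IsOrderedAddMonoid A] [PosSMulMono ℝ A]
  (hφ : IsWeight φ) (hY : ∀ v, 0 ≤ Y v v) (hfin : ∀ v, φ (Y v v) ≠ ∞)
include hφ hY hfin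

theorem weightQuadratic_eq_of_smul_add_smul_eq (r s t u : ℝ≥0) {v₁ v₂ w₁ w₂ : E}
    (h : (r : ℝ) • Y v₁ v₁ + (s : ℝ) • Y v₂ v₂ = (t : ℝ) • Y w₁ w₁ + (u : ℝ) • Y w₂ w₂) :
    r * weightQuadratic φ Y v₁ + s * weightQuadratic φ Y v₂ =
      t * weightQuadratic φ Y w₁ + u * weightQuadratic φ Y w₂ := by
  have h' := congrArg (fun a => (φ a).toReal) h
  simpa only [weightQuadratic, hφ.toReal_map_smul_add_smul (hY _) (hY _) (hfin _) (hfin _)] using h'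

theorem weightQuadratic_parallelogram (v w : E) :
    weightQuadratic φ Y (v + w) + weightQuadratic φ Y (v - w) =
      2 * weightQuadratic φ Y v + 2 * weightQuadratic φ Y w := by
  have h := weightQuadratic_eq_of_smul_add_smul_eq hφ hY hfin 1 1 2 2
    (v₁ := v + w) (v₂ := v - w) (w₁ := v) (w₂ := w) (by
      simp only [map_add, map_sub, LinearMap.add_apply, LinearMap.sub_apply, NNReal.coe_one,
        NNReal.coe_ofNat]
      module)
  simpa only [NNReal.coe_one, NNReal.coe_ofNat, one_mul] using h

theorem realPolarization_weightQuadratic_smul_left (r : ℝ≥0) (v w : E) :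
    realPolarization (weightQuadratic φ Y) ((r : ℝ) • v) w =
      r * realPolarization (weightQuadratic φ Y) v w := by
  have h := weightQuadratic_eq_of_smul_add_smul_eq hφ hY hfin 1 r 1 r
    (v₁ := (r : ℝ) • v + w) (v₂ := v - w) (w₁ := (r : ℝ) • v - w) (w₂ := v + w) (by
      simp only [map_add, map_sub, map_smul, LinearMap.add_apply, LinearMap.sub_apply,
        LinearMap.smul_apply, NNReal.coe_one]
      module)
  simp only [realPolarization, NNReal.coe_one, one_mul] at h ⊢
  linear_combination h / 4

end WeightQuadratic

section Baire

variable {E : Type*} [NormedAddCommGroup E] [NormedSpace ℝ E] {q : E → ℝ}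

theorem le_mul_norm_sq_of_forall_norm_lt_le (hsmul : ∀ (r : ℝ) v, q (r • v) = r ^ 2 * q v)
    {r K : ℝ} (hr : 0 < r) (hK : ∀ u, ‖u‖ < r → q u ≤ K) (v : E) :
    q v ≤ 4 * K / r ^ 2 * ‖v‖ ^ 2 := by
  rcases eq_or_ne v 0 with rfl | hv
  · simpa using (hsmul 0 0).le
  set t := 2 * ‖v‖ / r
  have ht : 0 < t := by positivity
  have hu : ‖t⁻¹ • v‖ < r := by
    rw [norm_smul, norm_inv, Real.norm_of_nonneg ht.le]
    simp only [t]
    field_simp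
    linarith
  calc q v = t ^ 2 * q (t⁻¹ • v) := by rw [← hsmul, smul_inv_smul₀ ht.ne']
    _ ≤ t ^ 2 * K := by gcongr; exact hK _ hu
    _ = 4 * K / r ^ 2 * ‖v‖ ^ 2 := by simp only [t]; ring

/-- Baire: some closed sublevel set contains a ball `B(v₀, r)`, and `q u ≤ 2 q (v₀ + u) + 2 q v₀`
bounds `q` on `B(0, r)`. -/
theorem exists_le_mul_norm_sq_of_isClosed [CompleteSpace E] (hq0 : ∀ v, 0 ≤ q v)
    (hpar : ∀ v w, q (v + w) + q (v - w) = 2 * q v + 2 * q w)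
    (hsmul : ∀ (r : ℝ) v, q (r • v) = r ^ 2 * q v) (hclosed : ∀ n : ℕ, IsClosed {v | q v ≤ n}) :
    ∃ M, ∀ v, q v ≤ M * ‖v‖ ^ 2 := by
  obtain ⟨n, v₀, hv₀⟩ := nonempty_interior_of_iUnion_of_closed hclosed
    (Set.iUnion_eq_univ_iff.2 fun v => ⟨⌈q v⌉₊, show q v ≤ _ from Nat.le_ceil _⟩)
  obtain ⟨r, hr, hball⟩ := Metric.mem_nhds_iff.1 (mem_interior_iff_mem_nhds.1 hv₀)
  refine ⟨4 * (4 * n) / r ^ 2, le_mul_norm_sq_of_forall_norm_lt_le hsmul hr fun u hu => ?_⟩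
  have h₀ : q v₀ ≤ n := hball (Metric.mem_ball_self hr)
  have h₁ : q (v₀ + u) ≤ n := hball (by rwa [Metric.mem_ball, dist_self_add_left])
  have h := hpar (v₀ + u) v₀
  rw [add_sub_cancel_left] at h
  linarith [hq0 (v₀ + u + v₀)]

end Baire

section ComplexStructure

open Complex

variable {H : Type*} [AddCommGroup H] [Module ℂ H] {R : LinearMap.BilinForm ℝ H}

theorem smul_eq_re_smul_add_im_smul (c : ℂ) (v : H) : c • v = c.re • v + c.im • (I • v) := by
  rw [← Complex.coe_smul, ← Complex.coe_smul, smul_smul, ← add_smul, re_add_im]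

variable (hI : ∀ v w, R (I • v) (I • w) = R v w)
include hI

theorem apply_I_smul_right (v w : H) : R v (I • w) = -R (I • v) w := by
  have h := hI (I • v) w
  rw [smul_smul, I_mul_I, neg_one_smul, map_neg, LinearMap.neg_apply] at h
  linarith

variable (R) in
noncomputable def sesqFormOfReal : H →ₗ⋆[ℂ] H →ₗ[ℂ] ℂ :=
  LinearMap.mk₂'ₛₗ (starRingEnd ℂ) (RingHom.id ℂ) (fun v w => (R v w : ℂ) + I * R (I • v) w)
    (fun v v' w => by simp only [map_add, smul_add, LinearMap.add_apply]; push_cast; ring)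
    (fun c v w => by
      rw [smul_comm, smul_eq_re_smul_add_im_smul c v, smul_eq_re_smul_add_im_smul c]
      simp only [map_add, map_smul, LinearMap.add_apply, LinearMap.smul_apply, smul_smul, I_mul_I,
        neg_one_smul, map_neg, LinearMap.neg_apply, smul_eq_mul]
      apply Complex.ext <;> simp)
    (fun v w w' => by simp only [map_add]; push_cast; ring)
    (fun c v w => by
      rw [smul_eq_re_smul_add_im_smul c w]
      simp only [map_add, map_smul, hI, smul_eq_mul]
      simp only [apply_I_smul_right hI]
      apply Complex.ext <;> simp; ring)

theorem sesqFormOfReal_apply (v w : H) :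
    sesqFormOfReal R hI v w = (R v w : ℂ) + I * R (I • v) w := rfl

theorem sesqFormOfReal_self (hR : LinearMap.IsSymm R) (v : H) :
    sesqFormOfReal R hI v v = R v v := by
  have h := apply_I_smul_right hI v v
  rw [← hR.eq, RingHom.id_apply] at h
  rw [sesqFormOfReal_apply, show R (I • v) v = 0 by linarith, ofReal_zero, mul_zero, add_zero]

end ComplexStructure

section Operator

open Complex

variable {H : Type*} [NormedAddCommGroup H] [InnerProductSpace ℂ H]

theorem ContinuousLinearMap.eq_of_forall_inner_self_apply_eq {S T : H →L[ℂ] H}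
    (h : ∀ v, ⟪v, S v⟫_ℂ = ⟪v, T v⟫_ℂ) : S = T :=
  ContinuousLinearMap.coe_injective <| (ext_inner_map _ _).1 fun v => by
    rw [ContinuousLinearMap.coe_coe, ContinuousLinearMap.coe_coe, ← inner_conj_symm, h,
      inner_conj_symm]

theorem exists_isPositive_inner_self_eq [CompleteSpace H] (R : LinearMap.BilinForm ℝ H)
    (hR : LinearMap.IsSymm R) (hR0 : ∀ v, 0 ≤ R v v) (hI : ∀ v w, R (I • v) (I • w) = R v w)
    {M : ℝ} (hM : ∀ v, R v v ≤ M * ‖v‖ ^ 2) :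
    ∃ T : H →L[ℂ] H, T.IsPositive ∧ ∀ v, ⟪v, T v⟫_ℂ = R v v := by
  have hbound (v w : H) : |R v w| ≤ |M| * ‖v‖ * ‖w‖ := by
    have hM' : R v v * R w w ≤ (M * ‖v‖ * ‖w‖) ^ 2 := by
      calc R v v * R w w ≤ (M * ‖v‖ ^ 2) * (M * ‖w‖ ^ 2) :=
            mul_le_mul (hM v) (hM w) (hR0 w) ((hR0 v).trans (hM v))
        _ = (M * ‖v‖ * ‖w‖) ^ 2 := by ring
    simpa [abs_mul] using sq_le_sq.1 ((R.apply_sq_le_of_symm hR0 hR v w).trans hM')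
  let B := (sesqFormOfReal R hI).mkContinuous₂ (2 * |M|) fun v w => by
    rw [sesqFormOfReal_apply]
    calc ‖(R v w : ℂ) + I * R (I • v) w‖ ≤ |R v w| + |R (I • v) w| := by
          simpa using norm_add_le (R v w : ℂ) (I * R (I • v) w)
      _ ≤ |M| * ‖v‖ * ‖w‖ + |M| * ‖I • v‖ * ‖w‖ := add_le_add (hbound _ _) (hbound _ _)
      _ = 2 * |M| * ‖v‖ * ‖w‖ := by rw [norm_smul, norm_I, one_mul]; ring
  let T := InnerProductSpace.continuousLinearMapOfBilin B
  have hT (v : H) : ⟪T v, v⟫_ℂ = R v v := by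
    simp [T, B, sesqFormOfReal_self hI hR]
  refine ⟨T, (ContinuousLinearMap.isPositive_iff_complex T).2 fun v => ?_, fun v => ?_⟩
  · simp [hT, hR0 v]
  · rw [← inner_conj_symm, hT, conj_ofReal]

end Operator

open Complex in
theorem exists_unique_positive_operator_of_weight_finite_general
    {A : Type*} [CStarAlgebra A] [PartialOrder A] [StarOrderedRing A]
    {H : Type*} [NormedAddCommGroup H] [InnerProductSpace ℂ H] [CompleteSpace H]
    (φ : A → ℝ≥0∞)
    (hφadd : ∀ a b : A, 0 ≤ a → 0 ≤ b → φ (a + b) = φ a + φ b)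
    (hφsmul : ∀ (r : ℝ≥0) (a : A), 0 ≤ a → φ ((r : ℝ) • a) = (r : ℝ≥0∞) * φ a)
    (hφlsc : ∀ α : ℝ≥0, IsClosed {a : A | 0 ≤ a ∧ φ a ≤ (α : ℝ≥0∞)})
    (x : H → H → A)
    (hadd₁ : ∀ v v' w : H, x (v + v') w = x v w + x v' w)
    (hsmul₁ : ∀ (c : ℂ) (v w : H), x (c • v) w = c • x v w)
    (hadd₂ : ∀ v w w' : H, x v (w + w') = x v w + x v w')
    (hsmul₂ : ∀ (c : ℂ) (v w : H), x v (c • w) = (conj c) • x v w)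
    (hpos : ∀ v : H, 0 ≤ x v v)
    (C : ℝ)
    (hbdd : ∀ v w : H, ‖x v w‖ ≤ C * ‖v‖ * ‖w‖)
    (hfin : ∀ v : H, φ (x v v) < ∞) :
    ∃! T : H →L[ℂ] H, T.IsPositive ∧
      ∀ v : H, ⟪v, T v⟫_ℂ = ((φ (x v v)).toReal : ℂ) := by
  let Y : H →ₗ[ℝ] H →ₗ[ℝ] A := LinearMap.mk₂ ℝ x hadd₁
    (fun r v w => by simpa only [coe_smul] using hsmul₁ r v w) hadd₂
    (fun r v w => by simpa only [conj_ofReal, coe_smul] using hsmul₂ r v w)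
  have hφ : IsWeight φ := ⟨hφadd, hφsmul⟩
  have hYfin (v : H) : φ (Y v v) ≠ ∞ := (hfin v).ne
  have hpar := weightQuadratic_parallelogram hφ hpos hYfin
  let R := realPolarizationForm hpar (realPolarization_weightQuadratic_smul_left hφ hpos hYfin)
  have hR (v : H) : R v v = (φ (x v v)).toReal := realPolarization_self hpar v
  have hqI (v : H) : weightQuadratic φ Y (I • v) = weightQuadratic φ Y v := by
    simp [weightQuadratic, Y, hsmul₁, hsmul₂, smul_smul]
  have hRI (v w : H) : R (I • v) (I • w) = R v w := by
    simp only [R, realPolarizationForm_apply, realPolarization, ← smul_add, ← smul_sub, hqI]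
  obtain ⟨M, hM⟩ := exists_le_mul_norm_sq_of_isClosed (fun _ => ENNReal.toReal_nonneg) hpar
    (weightQuadratic_smul hφ hpos) fun n => by
      exact_mod_cast isClosed_setOf_weightQuadratic_le hφlsc hpos hYfin
        ((Y.mkContinuous₂ C hbdd).continuous.clm_apply continuous_id) n
  obtain ⟨T, hTpos, hT⟩ := exists_isPositive_inner_self_eq R (realPolarizationForm_isSymm _ _)
    (fun v => (hR v).symm ▸ ENNReal.toReal_nonneg) hRI (M := M) fun v => (hR v).symm ▸ hM v
  refine ⟨T, ⟨hTpos, fun v => hR v ▸ hT v⟩, fun S hS =>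
    ContinuousLinearMap.eq_of_forall_inner_self_apply_eq fun v => ?_⟩
  rw [hS.2, hT, hR]

/-- Lemma 1.1 (abstract form): if `φ` is a lower semicontinuous weight on a
C*-algebra `A` and `x : H × H → A` is a bounded positive sesquilinear `A`-valued
map with `φ (x v v) < ∞` for every `v`, then there is a unique positive bounded
operator `T` on `H` with `⟨T v, v⟩ = φ (x v v)` for all `v`. -/
theorem exists_unique_positive_operator_of_weight_finite
    {A : Type*} [CStarAlgebra A] [PartialOrder A] [StarOrderedRing A]
    {H : Type*} [NormedAddCommGroup H] [InnerProductSpace ℂ H] [CompleteSpace H]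
    (φ : A → ℝ≥0∞)
    (hφadd : ∀ a b : A, 0 ≤ a → 0 ≤ b → φ (a + b) = φ a + φ b)
    (hφsmul : ∀ (r : ℝ≥0) (a : A), 0 ≤ a → φ ((r : ℝ) • a) = (r : ℝ≥0∞) * φ a)
    (hφlsc : ∀ α : ℝ≥0, IsClosed {a : A | 0 ≤ a ∧ φ a ≤ (α : ℝ≥0∞)})
    (x : H → H → A)
    (hadd₁ : ∀ v v' w : H, x (v + v') w = x v w + x v' w)
    (hsmul₁ : ∀ (c : ℂ) (v w : H), x (c • v) w = c • x v w)
    (hadd₂ : ∀ v w w' : H, x v (w + w') = x v w + x v w')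
    (hsmul₂ : ∀ (c : ℂ) (v w : H), x v (c • w) = (conj c) • x v w)
    (hstar : ∀ v w : H, x w v = star (x v w))
    (hpos : ∀ v : H, 0 ≤ x v v)
    (C : ℝ) (hC : 0 ≤ C)
    (hbdd : ∀ v w : H, ‖x v w‖ ≤ C * ‖v‖ * ‖w‖)
    (hfin : ∀ v : H, φ (x v v) < ∞) :
    ∃! T : H →L[ℂ] H, T.IsPositive ∧
      ∀ v : H, ⟪v, T v⟫_ℂ = ((φ (x v v)).toReal : ℂ) :=
  exists_unique_positive_operator_of_weight_finite_general φ hφadd hφsmul hφlsc x hadd₁ hsmul₁ hadd₂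
    hsmul₂ hpos C hbdd hfin
end

section
/- Let H be a complex Hilbert space, S a positive bounded operator on H, D a dense linear subspace of H, and p : H → [0,∞] a lower semicontinuous quadratic extended seminorm. If p(u) = ⟨S u, u⟩ for every u ∈ D, then p(u) = ⟨S u, u⟩ for every u ∈ H; in particular p is finite everywhere. -/
open scoped InnerProductSpace ENNReal NNReal

/-!
Write `q u = ⟪u, S u⟫`. Closed sublevel sets make `p` lower semicontinuous, so `p ≤ q`
passes from `D` to its closure. Conversely, for `x ∈ D` the triangle inequality gives
`√q x = √p x ≤ √p u + √p (x - u) ≤ √p u + √q (x - u)`, and letting `x → u` within `D`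
yields `√q u ≤ √p u` by continuity of `q`.
-/

theorem LowerSemicontinuous.isClosed_setOf_le {α γ : Type*} [TopologicalSpace α] [LinearOrder γ]
    [TopologicalSpace γ] [ClosedIciTopology γ] {f g : α → γ} (hf : LowerSemicontinuous f)
    (hg : Continuous g) : IsClosed {x | f x ≤ g x} :=
  hf.isClosed_epigraph.preimage (continuous_id.prodMk hg)

theorem LowerSemicontinuous.le_of_forall_mem_dense {α γ : Type*} [TopologicalSpace α]
    [LinearOrder γ] [TopologicalSpace γ] [ClosedIciTopology γ] {f g : α → γ}
    (hf : LowerSemicontinuous f) (hg : Continuous g) {D : Set α} (hD : Dense D)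
    (h : ∀ x ∈ D, f x ≤ g x) (x : α) : f x ≤ g x :=
  (hf.isClosed_setOf_le hg).closure_subset_iff.2 h (hD x)

theorem le_of_subadditive_of_eqOn_dense {G M : Type*} [AddGroup G] [TopologicalSpace G]
    [IsTopologicalAddGroup G] [AddCommMonoid M] [PartialOrder M] [IsOrderedAddMonoid M]
    [TopologicalSpace M] [OrderClosedTopology M] [ContinuousAdd M] {r s : G → M}
    (hr : ∀ v w, r (v + w) ≤ r v + r w) (hs : Continuous s) (hs0 : s 0 = 0)
    (hrs : ∀ v, r v ≤ s v) {D : Set G} (hD : Dense D) (hDrs : Set.EqOn r s D) (u : G) :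
    s u ≤ r u := by
  have hclosed : IsClosed {x | s x ≤ r u + s (-u + x)} :=
    isClosed_le hs (continuous_const.add (hs.comp (continuous_const_add (-u))))
  have hDsub : D ⊆ {x | s x ≤ r u + s (-u + x)} := fun x hx =>
    calc s x = r (u + (-u + x)) := by rw [add_neg_cancel_left, hDrs hx]
      _ ≤ r u + r (-u + x) := hr _ _
      _ ≤ r u + s (-u + x) := add_le_add_right (hrs _) _
  simpa [hs0] using hclosed.closure_subset_iff.2 hDsub (hD u)

theorem lsc_quadratic_extended_seminorm_eq_of_dense_general
    {H : Type*} [NormedAddCommGroup H] [InnerProductSpace ℂ H]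
    (S : H →L[ℂ] H)
    (D : Submodule ℂ H) (hD : Dense (D : Set H))
    (p : H → ℝ≥0∞)
    (htri : ∀ v w : H, (p (v + w)) ^ (1 / 2 : ℝ) ≤ p v ^ (1 / 2 : ℝ) + p w ^ (1 / 2 : ℝ))
    (hlsc : ∀ α : ℝ≥0, IsClosed {v : H | p v ≤ (α : ℝ≥0∞)})
    (hagree : ∀ u ∈ D, p u = ENNReal.ofReal ((⟪u, S u⟫_ℂ).re)) :
    ∀ u : H, p u = ENNReal.ofReal ((⟪u, S u⟫_ℂ).re) := by
  intro u
  set q : H → ℝ≥0∞ := fun v => ENNReal.ofReal (⟪v, S v⟫_ℂ).re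
  have hq : Continuous q := ENNReal.continuous_ofReal.comp (by fun_prop)
  have hp : LowerSemicontinuous p := by
    refine lowerSemicontinuous_iff_isClosed_preimage.2 fun α => ?_
    induction α with
    | top => simp
    | coe α => exact hlsc α
  have hpq : ∀ v, p v ≤ q v := hp.le_of_forall_mem_dense hq hD fun v hv => (hagree v hv).le
  have hqp : q u ^ (1 / 2 : ℝ) ≤ p u ^ (1 / 2 : ℝ) :=
    le_of_subadditive_of_eqOn_dense (r := fun v => p v ^ (1 / 2 : ℝ))
      (s := fun v => q v ^ (1 / 2 : ℝ)) htri (ENNReal.continuous_rpow_const.comp hq)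
      (by simp [q]) (fun v => ENNReal.rpow_le_rpow (hpq v) (by norm_num)) hD
      (fun v hv => by simp only [hagree v hv, q]) u
  exact le_antisymm (hpq u) ((ENNReal.rpow_le_rpow_iff (by norm_num)).1 hqp)

/-- A lower semicontinuous quadratic extended seminorm on a complex Hilbert space
that agrees on a dense subspace with the quadratic form of a bounded positive
operator agrees with it everywhere. -/
theorem lsc_quadratic_extended_seminorm_eq_of_dense
    {H : Type*} [NormedAddCommGroup H] [InnerProductSpace ℂ H] [CompleteSpace H]
    (S : H →L[ℂ] H) (hS : S.IsPositive)
    (D : Submodule ℂ H) (hD : Dense (D : Set H))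
    (p : H → ℝ≥0∞)
    (hquad : ∀ (c : ℂ) (v : H), p (c • v) = ((‖c‖₊ ^ 2 : ℝ≥0) : ℝ≥0∞) * p v)
    (htri : ∀ v w : H, (p (v + w)) ^ (1 / 2 : ℝ) ≤ p v ^ (1 / 2 : ℝ) + p w ^ (1 / 2 : ℝ))
    (hlsc : ∀ α : ℝ≥0, IsClosed {v : H | p v ≤ (α : ℝ≥0∞)})
    (hagree : ∀ u ∈ D, p u = ENNReal.ofReal ((⟪u, S u⟫_ℂ).re)) :
    ∀ u : H, p u = ENNReal.ofReal ((⟪u, S u⟫_ℂ).re) :=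
  lsc_quadratic_extended_seminorm_eq_of_dense_general S D hD p htri hlsc hagree
end

section
/- Let E be a normed space and p : E → [0,∞] a lower semicontinuous quadratic extended seminorm. Let (uₙ) be a sequence in E converging in norm to u ∈ E such that for every ε > 0 there exists n₀ with p(uₙ − uₘ) ≤ ε for all m, n ≥ n₀. Then p(uₙ − u) → 0 as n → ∞; if moreover p(uₙ) < ∞ for every n, then p(u) < ∞ and p(uₙ) → p(u). -/
open scoped ENNReal NNReal
open Filter Topology

/-!
Lower semicontinuity lets one pass to the limit `m → ∞` in `p (uₙ - uₘ) ≤ ε`, which gives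
`p (uₙ - l) ≤ ε`, and likewise `p (l - uₙ) ≤ ε`, for large `n`. Since `√p` is subadditive,
`√p (uₙ)` is then squeezed between `√p l - √p (l - uₙ)` and `√p (uₙ - l) + √p l`.
-/

theorem ENNReal.lowerSemicontinuous_of_isClosed_sublevel {X : Type*} [TopologicalSpace X]
    {p : X → ℝ≥0∞} (hp : ∀ α : ℝ≥0, IsClosed {x | p x ≤ α}) : LowerSemicontinuous p := by
  refine lowerSemicontinuous_iff_isClosed_preimage.2 fun α => ?_
  cases α with
  | top => simp
  | coe α => exact hp α

theorem ENNReal.tendsto_rpow_iff {ι : Type*} {l : Filter ι} {f : ι → ℝ≥0∞} {a : ℝ≥0∞}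
    {y : ℝ} (hy : 0 < y) :
    Tendsto (fun i => f i ^ y) l (𝓝 (a ^ y)) ↔ Tendsto f l (𝓝 a) :=
  ((ENNReal.orderIsoRpow y hy).toHomeomorph.isInducing.tendsto_nhds_iff).symm

section Subadditive

variable {E ι : Type*} [AddGroup E] {q : E → ℝ≥0∞} {l : Filter ι} {u : ι → E} {x : E}

theorem tendsto_apply_of_subadditive (hq : ∀ v w, q (v + w) ≤ q v + q w)
    (h₁ : Tendsto (fun i => q (u i - x)) l (𝓝 0)) (h₂ : Tendsto (fun i => q (x - u i)) l (𝓝 0)) :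
    Tendsto (fun i => q (u i)) l (𝓝 (q x)) := by
  have hlower : ∀ i, q x - q (x - u i) ≤ q (u i) := fun i =>
    tsub_le_iff_left.2 (by simpa using hq (x - u i) (u i))
  have hupper : ∀ i, q (u i) ≤ q (u i - x) + q x := fun i => by
    simpa using hq (u i - x) x
  refine tendsto_of_tendsto_of_tendsto_of_le_of_le ?_ ?_ hlower hupper
  · simpa using ENNReal.Tendsto.sub tendsto_const_nhds h₂ (Or.inr ENNReal.zero_ne_top)
  · simpa using h₁.add (tendsto_const_nhds (x := q x))

theorem ne_top_of_subadditive [l.NeBot] (hq : ∀ v w, q (v + w) ≤ q v + q w)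
    (h₂ : Tendsto (fun i => q (x - u i)) l (𝓝 0)) (hfin : ∀ i, q (u i) ≠ ∞) : q x ≠ ∞ := by
  obtain ⟨i, hi⟩ := (h₂.eventually_lt_const ENNReal.zero_lt_top).exists
  refine (lt_of_le_of_lt ?_ (ENNReal.add_lt_top.2 ⟨hi, (hfin i).lt_top⟩)).ne
  simpa using hq (x - u i) (u i)

end Subadditive

section Cauchy

variable {E : Type*} [TopologicalSpace E] [AddGroup E] [IsTopologicalAddGroup E]
  {p : E → ℝ≥0∞} {u : ℕ → E} {x : E}

theorem LowerSemicontinuous.tendsto_sub_of_cauchy (hp : LowerSemicontinuous p)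
    (hconv : Tendsto u atTop (𝓝 x))
    (hcauchy : ∀ ε : ℝ≥0∞, 0 < ε → ∃ n₀ : ℕ, ∀ m n : ℕ, n₀ ≤ m → n₀ ≤ n → p (u n - u m) ≤ ε) :
    Tendsto (fun n => p (u n - x)) atTop (𝓝 0) := by
  refine ENNReal.tendsto_nhds_zero.2 fun ε hε => ?_
  obtain ⟨n₀, hn₀⟩ := hcauchy ε hε
  filter_upwards [eventually_ge_atTop n₀] with n hn
  exact (hp.isClosed_preimage ε).mem_of_tendsto (tendsto_const_nhds.sub hconv)
    ((eventually_ge_atTop n₀).mono fun m hm => hn₀ m n hm hn)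

theorem LowerSemicontinuous.tendsto_sub_rev_of_cauchy (hp : LowerSemicontinuous p)
    (hconv : Tendsto u atTop (𝓝 x))
    (hcauchy : ∀ ε : ℝ≥0∞, 0 < ε → ∃ n₀ : ℕ, ∀ m n : ℕ, n₀ ≤ m → n₀ ≤ n → p (u n - u m) ≤ ε) :
    Tendsto (fun n => p (x - u n)) atTop (𝓝 0) := by
  have hcauchy' : ∀ ε : ℝ≥0∞, 0 < ε → ∃ n₀ : ℕ, ∀ m n : ℕ, n₀ ≤ m → n₀ ≤ n →
      p (-(u n - u m)) ≤ ε := fun ε hε =>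
    (hcauchy ε hε).imp fun _ h m n hm hn => by simpa using h n m hn hm
  simpa using (hp.comp continuous_neg).tendsto_sub_of_cauchy hconv hcauchy'

end Cauchy

theorem lsc_quadratic_extended_seminorm_tendsto_of_cauchy_general
    {E : Type*} [NormedAddCommGroup E]
    (p : E → ℝ≥0∞)
    (htri : ∀ v w : E, (p (v + w)) ^ (1 / 2 : ℝ) ≤ p v ^ (1 / 2 : ℝ) + p w ^ (1 / 2 : ℝ))
    (hlsc : ∀ α : ℝ≥0, IsClosed {v : E | p v ≤ (α : ℝ≥0∞)})
    (u : ℕ → E) (l : E)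
    (hconv : Tendsto u atTop (nhds l))
    (hcauchy : ∀ ε : ℝ≥0∞, 0 < ε → ∃ n₀ : ℕ, ∀ m n : ℕ, n₀ ≤ m → n₀ ≤ n →
      p (u n - u m) ≤ ε) :
    Tendsto (fun n => p (u n - l)) atTop (nhds 0) ∧
      ((∀ n, p (u n) < ∞) → p l < ∞ ∧ Tendsto (fun n => p (u n)) atTop (nhds (p l))) := by
  have hp := ENNReal.lowerSemicontinuous_of_isClosed_sublevel hlsc
  have h₁ := hp.tendsto_sub_of_cauchy hconv hcauchy
  have h₂ := hp.tendsto_sub_rev_of_cauchy hconv hcauchy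
  have hhalf : (0 : ℝ) < 1 / 2 := by norm_num
  have sqrt_tendsto_zero {v : ℕ → E} (hv : Tendsto (fun n => p (v n)) atTop (𝓝 0)) :
      Tendsto (fun n => p (v n) ^ (1 / 2 : ℝ)) atTop (𝓝 0) := by
    simpa [ENNReal.zero_rpow_of_pos hhalf] using (ENNReal.tendsto_rpow_iff hhalf).2 hv
  refine ⟨h₁, fun hfin => ⟨?_, ?_⟩⟩
  · rw [← ENNReal.rpow_lt_top_iff_of_pos hhalf]
    exact (ne_top_of_subadditive htri (sqrt_tendsto_zero h₂) fun n =>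
      ((ENNReal.rpow_lt_top_iff_of_pos hhalf).2 (hfin n)).ne).lt_top
  · exact (ENNReal.tendsto_rpow_iff hhalf).1 (tendsto_apply_of_subadditive htri
      (sqrt_tendsto_zero h₁) (sqrt_tendsto_zero h₂))

/-- Lower semicontinuity upgrades Cauchyness with respect to a quadratic extended
seminorm, together with norm convergence, to convergence in the extended seminorm. -/
theorem lsc_quadratic_extended_seminorm_tendsto_of_cauchy
    {E : Type*} [NormedAddCommGroup E] [NormedSpace ℂ E]
    (p : E → ℝ≥0∞)
    (hquad : ∀ (c : ℂ) (v : E), p (c • v) = ((‖c‖₊ ^ 2 : ℝ≥0) : ℝ≥0∞) * p v)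
    (htri : ∀ v w : E, (p (v + w)) ^ (1 / 2 : ℝ) ≤ p v ^ (1 / 2 : ℝ) + p w ^ (1 / 2 : ℝ))
    (hlsc : ∀ α : ℝ≥0, IsClosed {v : E | p v ≤ (α : ℝ≥0∞)})
    (u : ℕ → E) (l : E)
    (hconv : Tendsto u atTop (nhds l))
    (hcauchy : ∀ ε : ℝ≥0∞, 0 < ε → ∃ n₀ : ℕ, ∀ m n : ℕ, n₀ ≤ m → n₀ ≤ n →
      p (u n - u m) ≤ ε) :
    Tendsto (fun n => p (u n - l)) atTop (nhds 0) ∧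
      ((∀ n, p (u n) < ∞) → p l < ∞ ∧ Tendsto (fun n => p (u n)) atTop (nhds (p l))) :=
  lsc_quadratic_extended_seminorm_tendsto_of_cauchy_general p htri hlsc u l hconv hcauchy
end

section
/- Let A be a C*-algebra, H a complex Hilbert space, and φ : A⁺ → [0,∞] a lower semicontinuous function on the positive cone A⁺ of A. Set N = {a ∈ A : φ(a* a) < ∞} and suppose N is a linear subspace of A. Let Λ : N → H be a linear map with ‖Λ(a)‖² = φ(a* a) for every a ∈ N. Then Λ is closed: whenever (aₙ) is a sequence in N with aₙ → a in norm in A and Λ(aₙ) → h in H, one has a ∈ N and Λ(a) = h. -/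
open Filter
open scoped ENNReal NNReal Topology

/-- The GNS map of a lower semicontinuous weight is closed: if `φ` is a lower
semicontinuous `[0,∞]`-valued function on the positive cone of a C*-algebra `A`,
`N = {a : φ(a*a) < ∞}` is a linear subspace, and `Λ : N → H` is linear with
`‖Λ a‖² = φ(a*a)`, then `Λ` has closed graph. -/
theorem gns_map_closed_of_lowerSemicontinuous_weight
    {A : Type*} [CStarAlgebra A] [PartialOrder A] [StarOrderedRing A]
    {H : Type*} [NormedAddCommGroup H] [InnerProductSpace ℂ H] [CompleteSpace H]
    (φ : A → ℝ≥0∞)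
    (hφlsc : ∀ α : ℝ≥0, IsClosed {a : A | 0 ≤ a ∧ φ a ≤ (α : ℝ≥0∞)})
    (N : Submodule ℂ A)
    (hN : ∀ a : A, a ∈ N ↔ φ (star a * a) < ∞)
    (Λ : N →ₗ[ℂ] H)
    (hΛ : ∀ a : N, ENNReal.ofReal (‖Λ a‖ ^ 2) = φ (star (a : A) * (a : A))) :
    ∀ (u : ℕ → N) (b : A) (h : H),
      Tendsto (fun n => (u n : A)) atTop (𝓝 b) →
      Tendsto (fun n => Λ (u n)) atTop (𝓝 h) →
      ∃ hb : b ∈ N, Λ ⟨b, hb⟩ = h := by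
  intro u b h hub hΛh
  have key : ∀ ε : ℝ, 0 < ε → ∃ N₀ : ℕ, ∀ n ≥ N₀,
      φ (star ((u n : A) - b) * ((u n : A) - b)) ≤ ENNReal.ofReal (ε ^ 2) := by
    intro ε hε
    have hcauchy : CauchySeq (fun n => Λ (u n)) := hΛh.cauchySeq
    obtain ⟨N₀, hN₀⟩ := Metric.cauchySeq_iff.mp hcauchy ε hε
    refine ⟨N₀, fun n hn => ?_⟩
    have hclosed := hφlsc (ε ^ 2).toNNReal
    have htend : Tendsto (fun m => star ((u n : A) - (u m : A)) * ((u n : A) - (u m : A)))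
        atTop (𝓝 (star ((u n : A) - b) * ((u n : A) - b))) := by
      have h1 : Tendsto (fun m => (u n : A) - (u m : A)) atTop (𝓝 ((u n : A) - b)) :=
        tendsto_const_nhds.sub hub
      exact (h1.star).mul h1
    have hmem : star ((u n : A) - b) * ((u n : A) - b) ∈
        {a : A | 0 ≤ a ∧ φ a ≤ ((ε ^ 2).toNNReal : ℝ≥0∞)} := by
      refine hclosed.mem_of_tendsto htend ?_
      filter_upwards [eventually_ge_atTop N₀] with m hm
      refine ⟨star_mul_self_nonneg _, ?_⟩
      have heq : (u n : A) - (u m : A) = ((u n - u m : N) : A) := rfl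
      rw [heq, ← hΛ (u n - u m)]
      have hd : ‖Λ (u n - u m)‖ < ε := by
        rw [map_sub, ← dist_eq_norm]
        exact hN₀ n hn m hm
      have hsq : ‖Λ (u n - u m)‖ ^ 2 ≤ ε ^ 2 := by
        nlinarith [norm_nonneg (Λ (u n - u m))]
      calc ENNReal.ofReal (‖Λ (u n - u m)‖ ^ 2) ≤ ENNReal.ofReal (ε ^ 2) :=
            ENNReal.ofReal_le_ofReal hsq
        _ = ((ε ^ 2).toNNReal : ℝ≥0∞) := rfl
    exact hmem.2
  obtain ⟨N₁, hN₁⟩ := key 1 one_pos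
  have hc : φ (star ((u N₁ : A) - b) * ((u N₁ : A) - b)) < ∞ :=
    lt_of_le_of_lt (hN₁ N₁ le_rfl) ENNReal.ofReal_lt_top
  have hcN : ((u N₁ : A) - b) ∈ N := (hN _).mpr hc
  have hb : b ∈ N := by
    have := N.sub_mem (u N₁).2 hcN
    simpa using this
  refine ⟨hb, ?_⟩
  have hlim : Tendsto (fun n => Λ (u n)) atTop (𝓝 (Λ ⟨b, hb⟩)) := by
    rw [Metric.tendsto_atTop]
    intro ε hε
    obtain ⟨N₀, hN₀⟩ := key (ε / 2) (by positivity)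
    refine ⟨N₀, fun n hn => ?_⟩
    have heq : ((u n - ⟨b, hb⟩ : N) : A) = (u n : A) - b := rfl
    have h1 : ENNReal.ofReal (‖Λ (u n - ⟨b, hb⟩)‖ ^ 2) ≤ ENNReal.ofReal ((ε / 2) ^ 2) := by
      rw [hΛ, heq]
      exact hN₀ n hn
    have h2 : ‖Λ (u n - ⟨b, hb⟩)‖ ^ 2 ≤ (ε / 2) ^ 2 :=
      (ENNReal.ofReal_le_ofReal_iff (by positivity)).mp h1
    have h3 : ‖Λ (u n) - Λ ⟨b, hb⟩‖ ≤ ε / 2 := by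
      rw [← map_sub]
      nlinarith [norm_nonneg (Λ (u n - ⟨b, hb⟩))]
    rw [dist_eq_norm]
    linarith
  exact tendsto_nhds_unique hlim hΛh
end
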